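/- arXiv:1604.05348 — 2 statements merged into one kernel-verified Lean document; each statement's English description precedes it below -/
import Mathlib

section
/- Let D be an integral domain that is both pre-Schreier and IDF. Then the polynomial ring D[X] is an IDF domain. -/
/-- An integral domain is an *IDF domain* if every nonzero element has only finitely
many irreducible divisors up to associates. -/
def IsIDFDomain (D : Type*) [CommMonoidWithZero D] : Prop :=
  ∀ a : D, a ≠ 0 → (Associates.mk '' {p : D | Irreducible p ∧ p ∣ a}).Finite

/-- `c` is a *maximal common divisor* (MCD) of the set `T`: it is a common divisor of
`T` and every common divisor of `T` divisible by `c` is an associate of `c`. -/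
def IsMCD {D : Type*} [CommMonoidWithZero D] (T : Set D) (c : D) : Prop :=
  (∀ t ∈ T, c ∣ t) ∧ ∀ d : D, (∀ t ∈ T, d ∣ t) → c ∣ d → Associated c d

/-- A domain is *MCD-finite* if every finite subset of its nonzero elements has only
finitely many maximal common divisors up to associates. -/
def MCDFinite (D : Type*) [CommMonoidWithZero D] : Prop :=
  ∀ T : Set D, T.Finite → (∀ t ∈ T, t ≠ 0) →
    (Associates.mk '' {c : D | IsMCD T c}).Finite

/-!
An irreducible divisor `p` of `g ≠ 0` in `D[X]` is either a constant, hence an irreducible element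
of `D` dividing the leading coefficient of `g`, and there are finitely many of those by the IDF
property; or it is nonconstant, hence primitive. Nonconstant irreducible divisors are counted
through their images in `K[X]`, `K` the fraction field, where `g` has finitely many divisors up to
associates. Two such divisors `p, q` whose images are associated satisfy `C b * q = C a * p`, and
pre-Schreier makes a primitive `p` content-free: splitting `b = b₁ * b₂` with `b₁ ∣ a` and `b₂`
dividing every coefficient of `p` forces `b₂` to be a unit, so `b ∣ a` and `p ∣ q`.
-/

open Polynomial

theorem Set.Finite.associatesMk_image_of_image {α β : Type*} [Monoid α] {S : Set α}
    {h : α → β} (hfin : (h '' S).Finite)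
    (hfib : ∀ p ∈ S, ∀ q ∈ S, h p = h q → Associated p q) :
    (Associates.mk '' S).Finite := by
  refine (hfin.biUnion fun b _ => (?_ : (Associates.mk '' {p ∈ S | h p = b}).Subsingleton).finite)
    |>.subset ?_
  · rintro _ ⟨p, ⟨hp, rfl⟩, rfl⟩ _ ⟨q, ⟨hq, hqp⟩, rfl⟩
    exact Associates.mk_eq_mk_iff_associated.mpr (hfib p hp q hq hqp.symm)
  · rintro _ ⟨p, hp, rfl⟩
    exact Set.mem_biUnion (Set.mem_image_of_mem h hp) ⟨p, ⟨hp, rfl⟩, rfl⟩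

theorem UniqueFactorizationMonoid.finite_associatesMk_dvd {M : Type*} [CommMonoidWithZero M]
    [UniqueFactorizationMonoid M] {y : M} (hy : y ≠ 0) :
    (Associates.mk '' {x : M | x ∣ y}).Finite := by
  have := fintypeSubtypeDvd (Associates.mk y) (Associates.mk_ne_zero.mpr hy)
  refine (Set.finite_coe_iff.mp (Finite.of_fintype {x // x ∣ Associates.mk y})).subset ?_
  rintro _ ⟨x, hx, rfl⟩
  exact Associates.mk_dvd_mk.mpr hx

theorem exists_dvd_and_forall_dvd_of_forall_dvd_mul {α ι : Type*} [CommMonoidWithZero α]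
    [IsCancelMulZero α] [DecompositionMonoid α] {a b : α} (s : Finset ι) (f : ι → α)
    (h : ∀ i ∈ s, a ∣ b * f i) :
    ∃ a₁ a₂, a₁ ∣ b ∧ (∀ i ∈ s, a₂ ∣ f i) ∧ a = a₁ * a₂ := by
  classical
  induction s using Finset.induction_on with
  | empty => exact ⟨1, a, one_dvd b, by simp, (one_mul a).symm⟩
  | insert i s _ ih =>
    obtain ⟨a₁, a₂, ⟨b', rfl⟩, ha₂, rfl⟩ := ih fun j hj => h j (Finset.mem_insert_of_mem hj)
    obtain rfl | ha₁ := eq_or_ne a₁ 0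
    · exact ⟨0, 1, dvd_mul_right 0 b', fun _ _ => one_dvd _, by simp⟩
    have hi : a₂ ∣ b' * f i := by
      simpa only [mul_assoc, mul_dvd_mul_iff_left ha₁] using h i (Finset.mem_insert_self i s)
    obtain ⟨c₁, c₂, hc₁, hc₂, rfl⟩ := exists_dvd_and_dvd_of_dvd_mul hi
    refine ⟨a₁ * c₁, c₂, mul_dvd_mul_left a₁ hc₁, ?_, (mul_assoc _ _ _).symm⟩
    intro j hj
    rcases Finset.mem_insert.mp hj with rfl | hj
    · exact hc₂
    · exact (dvd_mul_left c₂ c₁).trans (ha₂ j hj)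

namespace Polynomial

variable {R : Type*} [CommRing R]

theorem finite_associatesMk_irreducible_dvd_of_natDegree_eq_zero (hIDF : IsIDFDomain R)
    {g : R[X]} (hg : g ≠ 0) :
    (Associates.mk '' {p : R[X] | Irreducible p ∧ p ∣ g ∧ p.natDegree = 0}).Finite := by
  refine Set.Finite.associatesMk_image_of_image (h := fun p => Associates.mk (p.coeff 0))
    ((hIDF _ (leadingCoeff_ne_zero.mpr hg)).subset ?_) ?_
  · rintro _ ⟨p, ⟨hirr, hdvd, hdeg⟩, rfl⟩
    rw [eq_C_of_natDegree_eq_zero hdeg] at hirr hdvd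
    exact ⟨p.coeff 0, ⟨hirr.of_map, (C_dvd_iff_dvd_coeff _ _).mp hdvd _⟩, rfl⟩
  · rintro p ⟨-, -, hp⟩ q ⟨-, -, hq⟩ h
    rw [eq_C_of_natDegree_eq_zero hp, eq_C_of_natDegree_eq_zero hq]
    exact (Associates.mk_eq_mk_iff_associated.mp h).map C

variable [IsDomain R]

theorem IsPrimitive.dvd_of_C_dvd_C_mul [DecompositionMonoid R] {p : R[X]} (hp : p.IsPrimitive)
    {a b : R} (h : C a ∣ C b * p) : a ∣ b := by
  have hcoeff : ∀ i ∈ p.support, a ∣ b * p.coeff i := fun i _ => by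
    simpa only [coeff_C_mul] using (C_dvd_iff_dvd_coeff _ _).mp h i
  obtain ⟨a₁, a₂, ha₁, ha₂, rfl⟩ := exists_dvd_and_forall_dvd_of_forall_dvd_mul _ _ hcoeff
  have hC : C a₂ ∣ p := by
    refine (C_dvd_iff_dvd_coeff _ _).mpr fun i => ?_
    by_cases hi : i ∈ p.support
    · exact ha₂ i hi
    · rw [notMem_support_iff.mp hi]; exact dvd_zero a₂
  exact ((hp a₂ hC).mul_right_dvd).mpr ha₁

theorem IsPrimitive.dvd_of_associated_map {K : Type*} [Field K] [Algebra R K] [IsFractionRing R K]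
    [DecompositionMonoid R] {p q : R[X]} (hp : p.IsPrimitive)
    (h : Associated (p.map (algebraMap R K)) (q.map (algebraMap R K))) : p ∣ q := by
  obtain ⟨u, hu⟩ := h
  obtain ⟨k, -, hk⟩ := Polynomial.isUnit_iff.mp u.isUnit
  obtain ⟨⟨a, b⟩, hab⟩ := IsLocalization.surj (nonZeroDivisors R) k
  have hb : (b : R) ≠ 0 := nonZeroDivisors.ne_zero b.2
  have hmap : C (b : R) * q = C a * p := by
    apply map_injective _ (IsFractionRing.injective R K)
    simp only [Polynomial.map_mul, map_C, ← hu, ← hk, ← hab, C_mul]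
    ring
  obtain ⟨t, rfl⟩ := hp.dvd_of_C_dvd_C_mul ⟨q, hmap.symm⟩
  have hq : q = C t * p :=
    mul_left_cancel₀ (C_ne_zero.mpr hb) (hmap.trans (by rw [C_mul, mul_assoc]))
  exact ⟨C t, hq.trans (mul_comm _ _)⟩

theorem finite_associatesMk_irreducible_dvd_of_natDegree_ne_zero [DecompositionMonoid R]
    {g : R[X]} (hg : g ≠ 0) :
    (Associates.mk '' {p : R[X] | Irreducible p ∧ p ∣ g ∧ p.natDegree ≠ 0}).Finite := by
  let φ := mapRingHom (algebraMap R (FractionRing R))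
  have hφ : Function.Injective φ := map_injective _ (IsFractionRing.injective R _)
  refine Set.Finite.associatesMk_image_of_image (h := fun p => Associates.mk (φ p))
    ((UniqueFactorizationMonoid.finite_associatesMk_dvd ((map_ne_zero_iff φ hφ).mpr hg)).subset
      ?_) ?_
  · rintro _ ⟨p, ⟨-, hdvd, -⟩, rfl⟩
    exact ⟨φ p, _root_.map_dvd φ hdvd, rfl⟩
  · rintro p ⟨hp, -, hpd⟩ q ⟨hq, -, -⟩ h
    exact hp.associated_of_dvd hq <|
      (hp.isPrimitive hpd).dvd_of_associated_map (Associates.mk_eq_mk_iff_associated.mp h)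

end Polynomial

/-- If an integral domain `D` is both pre-Schreier (every nonzero element is primal)
and IDF, then the polynomial ring `D[X]` is an IDF domain. -/
theorem polynomial_isIDF_of_preSchreier_and_isIDF (D : Type*) [CommRing D] [IsDomain D]
    (hps : ∀ a : D, a ≠ 0 → ∀ b c : D, a ∣ b * c →
      ∃ a₁ a₂ : D, a = a₁ * a₂ ∧ a₁ ∣ b ∧ a₂ ∣ c)
    (hIDF : IsIDFDomain D) :
    IsIDFDomain (Polynomial D) := by
  have : DecompositionMonoid D := ⟨fun a => by
    obtain rfl | ha := eq_or_ne a 0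
    · exact isPrimal_zero
    intro b c h
    obtain ⟨a₁, a₂, rfl, h₁, h₂⟩ := hps a ha b c h
    exact ⟨a₁, a₂, h₁, h₂, rfl⟩⟩
  intro g hg
  refine ((finite_associatesMk_irreducible_dvd_of_natDegree_eq_zero hIDF hg).union
    (finite_associatesMk_irreducible_dvd_of_natDegree_ne_zero hg)).subset ?_
  rintro _ ⟨p, ⟨hirr, hdvd⟩, rfl⟩
  by_cases hp : p.natDegree = 0
  · exact Or.inl ⟨p, ⟨hirr, hdvd, hp⟩, rfl⟩
  · exact Or.inr ⟨p, ⟨hirr, hdvd, hp⟩, rfl⟩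
end

section
/- Let D be an integral domain and let S be a torsion-free cancellative commutative monoid, and set R = D[X; S]. Then: (i) the extension D ⊆ R is division-preserving, i.e., for nonzero x, y ∈ D, if x divides y in R then x divides y in D; (ii) every irreducible element of D remains irreducible in R; and (iii) if moreover S is reduced, then the units of R are exactly the (images of the) units of D. -/
/-!
A cancellative torsion-free commutative monoid embeds into the divisible hull of its
Grothendieck group, a `ℚ`-vector space, and therefore has two unique sums. Over a domain
this forces both factors of a monomial `c X^s` (`c ≠ 0`) to be monomials: otherwise two
distinct uniquely attained sums of exponents would give two distinct monomials in the
product. Since `1` and the constants are monomials, units and factorizations of constants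
in `D[X; S]` are read off from those in `D` and in `S`.
-/

open AddMonoidAlgebra Finset

theorem TwoUniqueSums.of_isAddTorsionFree (S : Type*) [AddCancelCommMonoid S]
    [IsAddTorsionFree S] : TwoUniqueSums S :=
  .of_injective_addHom
    ((DivisibleHull.coeAddMonoidHom _).comp Algebra.GrothendieckAddGroup.of).toAddHom
    (DivisibleHull.coe_injective.comp Algebra.GrothendieckAddGroup.of_injective) inferInstance

namespace AddMonoidAlgebra

theorem dvd_of_single_zero_dvd_single_zero {D S : Type*} [Semiring D] [AddMonoid S] {x y : D}
    (h : single (0 : S) x ∣ single 0 y) : x ∣ y := by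
  obtain ⟨r, hr⟩ := h
  exact ⟨r.coeff 0, by rw [← coeff_single_zero_mul, ← hr, coeff_single, Finsupp.single_eq_same]⟩

section UniqueSums

variable {D S : Type*} [Semiring D] [NoZeroDivisors D] [Add S] [TwoUniqueSums S]

theorem one_lt_card_support_mul {p q : AddMonoidAlgebra D S}
    (h : 1 < #p.coeff.support * #q.coeff.support) : 1 < #(p * q).coeff.support := by
  obtain ⟨x, hx, y, hy, hxy, hux, huy⟩ := TwoUniqueSums.uniqueAdd_of_one_lt_card h
  rw [mem_product] at hx hy
  have mem_support {z : S × S} (hz : z.1 ∈ p.coeff.support ∧ z.2 ∈ q.coeff.support)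
      (hu : UniqueAdd p.coeff.support q.coeff.support z.1 z.2) :
      z.1 + z.2 ∈ (p * q).coeff.support := by
    rw [Finsupp.mem_support_iff, coeff_mul_add_of_uniqueAdd hu]
    exact mul_ne_zero (Finsupp.mem_support_iff.mp hz.1) (Finsupp.mem_support_iff.mp hz.2)
  refine one_lt_card.mpr ⟨_, mem_support hx hux, _, mem_support hy huy, fun hsum => hxy ?_⟩
  obtain ⟨h1, h2⟩ := hux hy.1 hy.2 hsum.symm
  exact Prod.ext h1.symm h2.symm

theorem exists_single_of_mul_eq_single {p q : AddMonoidAlgebra D S} {s : S} {c : D}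
    (hc : c ≠ 0) (h : p * q = single s c) :
    ∃ a b cp cq, p = single a cp ∧ q = single b cq ∧ a + b = s ∧ cp * cq = c := by
  have : Nonempty S := ⟨s⟩
  have card_pos {r : AddMonoidAlgebra D S} (hr : r ≠ 0) : 0 < #r.coeff.support :=
    card_pos.mpr (Finsupp.support_nonempty_iff.mpr (coeff_eq_zero.not.mpr hr))
  have exists_single {r : AddMonoidAlgebra D S} (hr : #r.coeff.support ≤ 1) :
      ∃ a cr, r = single a cr := by
    obtain ⟨a, cr, hr⟩ := Finsupp.card_support_le_one'.mp hr
    exact ⟨a, cr, coeff_inj.mp hr⟩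
  have hp : p ≠ 0 := by rintro rfl; simp_all [eq_comm]
  have hq : q ≠ 0 := by rintro rfl; simp_all [eq_comm]
  have hle : #p.coeff.support * #q.coeff.support ≤ 1 := by
    by_contra! hlt
    have := one_lt_card_support_mul hlt
    rw [h, coeff_single, Finsupp.support_single _ hc, card_singleton] at this
    exact this.false
  obtain ⟨a, cp, rfl⟩ := exists_single ((Nat.le_mul_of_pos_right _ (card_pos hq)).trans hle)
  obtain ⟨b, cq, rfl⟩ := exists_single ((Nat.le_mul_of_pos_left _ (card_pos hp)).trans hle)
  rw [single_mul_single, single_inj] at h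
  obtain ⟨hab, hcpq⟩ := h.resolve_right fun h0 => hc h0.2
  exact ⟨a, b, cp, cq, rfl, rfl, hab, hcpq⟩

end UniqueSums

theorem isUnit_single {D S : Type*} [CommSemiring D] [AddCommMonoid S] {a : S} {c : D}
    (ha : IsAddUnit a) (hc : IsUnit c) : IsUnit (single a c) := by
  obtain ⟨b, hab⟩ := ha.exists_neg
  obtain ⟨d, hcd⟩ := hc.exists_right_inv
  exact .of_mul_eq_one (single b d) (by rw [single_mul_single, hab, hcd, one_def])

section Units

variable {D S : Type*} [CommSemiring D] [NoZeroDivisors D] [Nontrivial D]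
  [AddCommMonoid S] [TwoUniqueSums S]

theorem isUnit_iff_exists_single {p : AddMonoidAlgebra D S} :
    IsUnit p ↔ ∃ a c, IsAddUnit a ∧ IsUnit c ∧ p = single a c := by
  refine ⟨fun hp => ?_, fun ⟨a, c, ha, hc, hp⟩ => hp ▸ isUnit_single ha hc⟩
  obtain ⟨w, hw⟩ := hp.exists_right_inv
  rw [one_def] at hw
  obtain ⟨a, b, c, d, rfl, -, hab, hcd⟩ := exists_single_of_mul_eq_single one_ne_zero hw
  exact ⟨a, c, .of_add_eq_zero b hab, .of_mul_eq_one d hcd, rfl⟩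

theorem isUnit_single_iff {a : S} {c : D} : IsUnit (single a c) ↔ IsAddUnit a ∧ IsUnit c := by
  refine ⟨fun h => ?_, fun ⟨ha, hc⟩ => isUnit_single ha hc⟩
  obtain ⟨a', c', ha', hc', he⟩ := isUnit_iff_exists_single.mp h
  obtain ⟨rfl, rfl⟩ := (single_inj.mp he).resolve_right fun h0 => hc'.ne_zero h0.2
  exact ⟨ha', hc'⟩

theorem irreducible_single_zero {c : D} (hc : Irreducible c) :
    Irreducible (single (0 : S) c) := by
  refine ⟨fun h => hc.not_isUnit (isUnit_single_iff.mp h).2, fun p q hpq => ?_⟩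
  obtain ⟨a, b, cp, cq, rfl, rfl, hab, hcpq⟩ := exists_single_of_mul_eq_single hc.ne_zero hpq.symm
  simp only [isUnit_single_iff, IsAddUnit.of_add_eq_zero b hab,
    IsAddUnit.of_add_eq_zero a ((add_comm b a).trans hab), true_and]
  exact hc.isUnit_or_isUnit hcpq.symm

end Units

end AddMonoidAlgebra

/-- Let `D` be an integral domain and `S` a torsion-free cancellative commutative
(additive) monoid, and let `R = D[X; S]` be the monoid ring. Then (i) the extension
`D ⊆ R` is division-preserving, (ii) irreducible elements of `D` remain irreducible in
`R`, and (iii) if moreover `S` is reduced (its only additive unit is `0`), the units of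
`R` are exactly the images of the units of `D`. -/
theorem addMonoidAlgebra_division_preserving_atoms_units
    (D : Type*) [CommRing D] [IsDomain D]
    (S : Type*) [AddCancelCommMonoid S]
    (htf : ∀ n : ℕ, n ≠ 0 → ∀ a b : S, n • a = n • b → a = b) :
    (∀ x y : D, x ≠ 0 → y ≠ 0 →
      ((AddMonoidAlgebra.singleZeroRingHom : D →+* AddMonoidAlgebra D S) x ∣
        (AddMonoidAlgebra.singleZeroRingHom : D →+* AddMonoidAlgebra D S) y) → x ∣ y) ∧
    (∀ a : D, Irreducible a →
      Irreducible ((AddMonoidAlgebra.singleZeroRingHom : D →+* AddMonoidAlgebra D S) a)) ∧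
    ((∀ u : S, IsAddUnit u → u = 0) →
      ∀ r : AddMonoidAlgebra D S, IsUnit r ↔
        ∃ v : D, IsUnit v ∧
          (AddMonoidAlgebra.singleZeroRingHom : D →+* AddMonoidAlgebra D S) v = r) := by
  have : IsAddTorsionFree S := ⟨fun n hn a b => htf n hn a b⟩
  have := TwoUniqueSums.of_isAddTorsionFree S
  simp only [singleZeroRingHom_apply]
  refine ⟨fun x y _ _ => dvd_of_single_zero_dvd_single_zero, fun a => irreducible_single_zero,
    fun hred r => ?_⟩
  rw [isUnit_iff_exists_single]
  constructor
  · rintro ⟨a, c, ha, hc, rfl⟩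
    exact ⟨c, hc, by simp [hred a ha]⟩
  · rintro ⟨v, hv, rfl⟩
    exact ⟨0, v, isAddUnit_zero, hv, rfl⟩
end
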